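/- Let n ≥ 1 be an integer, m = 2n, ω = exp(2πi/m) ∈ ℂ, and let g : ℤ → ℝ satisfy g_j ≥ 0 for all j, with (g_j)_{j∈ℤ} summable and (j(j−1)g_j)_{j∈ℤ} summable; write g''(1) := ∑_{j∈ℤ} j(j−1)g_j. Let ĝ : ℤ → ℝ vanish outside {−n+1, …, n}, satisfy ∑_{j=−n+1}^{n} ĝ_j ω^{i j} = ∑_{j∈ℤ} g_j ω^{i j} for every i ∈ {−n+1, …, n}, and write ĝ''(1) := ∑_{j=−n+1}^{n} j(j−1) ĝ_j. If ε > 0 and g''(1) − ĝ''(1) < ε, then ∑_{j∈ℤ} |g_j − ĝ_j| ≤ (1 + 1/(2n))·ε. -/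

import Mathlib

open scoped Real

/-!
Since `ω ^ (2n) = 1`, the interpolation conditions only see the periodization
`G j = ∑ l, g (j + 2n l)`, and the discrete Fourier transform on `2n` points is injective
(Vandermonde), so `ĝ = G` on the window `W = {-n+1, …, n}` and `ĝ = 0` off it. As `g ≥ 0`,
`G ≥ g` on `W` and `∑ G = ∑ g`, whence `‖g - ĝ‖_W = 2 ∑_{k ∉ W} g k`. On the other
hand `g''(1) - ĝ''(1) = ∑ k, (k (k - 1) - r (r - 1)) g k` with `r ∈ W` the residue of `k`
mod `2n`, and this weight vanishes on `W` and is at least `2n` off it.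
So `‖g - ĝ‖_W < ε / n`.
-/

section

variable {E : Type*} [NormedAddCommGroup E] [CompleteSpace E] {m : ℕ}

noncomputable def periodize (m : ℕ) (g : ℤ → E) (j : ℤ) : E := ∑' l : ℤ, g (j + l * m)

noncomputable def icoProdIntEquiv (hm : (0 : ℤ) < m) (a : ℤ) :
    Finset.Ico a (a + m) × ℤ ≃ ℤ where
  toFun p := p.1 + p.2 * m
  invFun k := (⟨toIcoMod hm a k, by simpa using toIcoMod_mem_Ico hm a k⟩, toIcoDiv hm a k)
  left_inv := by
    rintro ⟨⟨j, hj⟩, l⟩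
    have hj' : j ∈ Set.Ico a (a + m) := by simpa using hj
    have hj0 : toIcoDiv hm a j = 0 := (toIcoDiv_eq_iff hm).2 (by simpa using hj')
    ext
    · change toIcoMod hm a (j + l • (m : ℤ)) = j
      rw [toIcoMod_add_zsmul, (toIcoMod_eq_self hm).2 hj']
    · change toIcoDiv hm a (j + l • (m : ℤ)) = l
      rw [toIcoDiv_add_zsmul, hj0, zero_add]
  right_inv k := by simpa using toIcoMod_add_toIcoDiv_zsmul hm a k

theorem Summable.comp_add_mul {g : ℤ → E} (hg : Summable g) (hm : m ≠ 0) (j : ℤ) :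
    Summable fun l : ℤ => g (j + l * m) :=
  hg.comp_injective fun l l' h => by
    simpa [hm] using (add_right_injective j h : l * m = l' * m)

theorem tsum_eq_sum_Ico_periodize (hm : (0 : ℤ) < m) (a : ℤ) {g : ℤ → E} (hg : Summable g) :
    ∑' k, g k = ∑ j ∈ Finset.Ico a (a + m), periodize m g j := by
  have he : Summable (g ∘ icoProdIntEquiv hm a) := (icoProdIntEquiv hm a).summable_iff.2 hg
  rw [← (icoProdIntEquiv hm a).tsum_eq]
  refine (he.tsum_prod' fun j => hg.comp_add_mul (by omega) j).trans ?_
  rw [tsum_fintype]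
  exact Finset.sum_coe_sort _ (periodize m g)

theorem tsum_mul_eq_sum_Ico_mul_periodize {K : Type*} [NormedField K] [CompleteSpace K]
    (hm : (0 : ℤ) < m) (a : ℤ) {w g : ℤ → K} (hw : Function.Periodic w m)
    (hwg : Summable fun k => w k * g k) :
    ∑' k, w k * g k = ∑ j ∈ Finset.Ico a (a + m), w j * periodize m g j := by
  rw [tsum_eq_sum_Ico_periodize hm a hwg]
  refine Finset.sum_congr rfl fun j _ => ?_
  rw [periodize, periodize, ← tsum_mul_left]
  exact tsum_congr fun l => by rw [(by simpa using hw.int_mul l j : w (j + l * m) = w j)]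

theorem Int.sum_Ico_eq_sum_fin {M : Type*} [AddCommMonoid M] (f : ℤ → M) (a : ℤ) (m : ℕ) :
    ∑ j ∈ Finset.Ico a (a + m), f j = ∑ t : Fin m, f (a + t) := by
  rw [Fin.sum_univ_eq_sum_range (fun t => f (a + t))]
  refine Finset.sum_nbij' (fun j => (j - a).toNat) (fun t => a + t) ?_ ?_ ?_ ?_ ?_ <;>
    intro x hx <;> simp only [Finset.mem_Ico, Finset.mem_range] at hx ⊢
  all_goals first | omega | congr 1; omega

theorem IsPrimitiveRoot.eq_zero_of_forall_sum_mul_zpow_eq_zero {K : Type*} [Field K] {ζ : K}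
    (hζ : IsPrimitiveRoot ζ m) (a : ℤ) {c : ℤ → K}
    (h : ∀ i ∈ Finset.Ico a (a + m), ∑ j ∈ Finset.Ico a (a + m), c j * ζ ^ (i * j) = 0) :
    ∀ j ∈ Finset.Ico a (a + m), c j = 0 := by
  obtain rfl | hm := Nat.eq_zero_or_pos m
  · simp
  have h0 : ζ ≠ 0 := hζ.ne_zero hm.ne'
  have hv : (fun t : Fin m => c (a + t)) = 0 := by
    refine Matrix.eq_zero_of_forall_index_sum_mul_pow_eq_zero
      (f := fun s : Fin m => ζ ^ (a + s)) (fun s s' hss' => ?_) fun s => ?_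
    · simp only [zpow_add₀ h0, zpow_natCast, mul_right_inj' (zpow_ne_zero a h0)] at hss'
      exact Fin.ext (hζ.pow_inj s.2 s'.2 hss')
    · have hs := h (a + s) (by simp)
      rw [Int.sum_Ico_eq_sum_fin] at hs
      have hfac : ∀ t : Fin m, c (a + t) * ζ ^ ((a + s) * (a + t)) =
          ζ ^ ((a + s) * a) * (c (a + t) * (ζ ^ (a + s)) ^ (t : ℕ)) := fun t => by
        rw [← zpow_natCast, ← zpow_mul, mul_left_comm, ← zpow_add₀ h0, mul_add]
      rw [Finset.sum_congr rfl fun t _ => hfac t, ← Finset.mul_sum] at hs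
      exact (mul_eq_zero.1 hs).resolve_left (zpow_ne_zero _ h0)
  intro j hj
  rw [Finset.mem_Ico] at hj
  have hcj := congrFun hv ⟨(j - a).toNat, by omega⟩
  dsimp only [Pi.zero_apply] at hcj
  rwa [show a + ((j - a).toNat : ℤ) = j by omega] at hcj

theorem IsPrimitiveRoot.eqOn_periodize_of_sum_mul_zpow_eq_tsum {K : Type*} [NormedField K]
    [CompleteSpace K] {ζ : K} (hζ : IsPrimitiveRoot ζ m) (a : ℤ) {c g : ℤ → K}
    (hg : ∀ i : ℤ, Summable fun k => g k * ζ ^ (i * k))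
    (h : ∀ i ∈ Finset.Ico a (a + m),
      ∑ j ∈ Finset.Ico a (a + m), c j * ζ ^ (i * j) = ∑' k, g k * ζ ^ (i * k)) :
    ∀ j ∈ Finset.Ico a (a + m), c j = periodize m g j := by
  obtain rfl | hm := Nat.eq_zero_or_pos m
  · simp
  have h0 : ζ ≠ 0 := hζ.ne_zero hm.ne'
  have hper (i : ℤ) : Function.Periodic (fun k : ℤ => ζ ^ (i * k)) m := fun k => by
    simp only [mul_add, zpow_add₀ h0, mul_comm i (m : ℤ), zpow_mul, zpow_natCast,
      hζ.pow_eq_one, one_zpow, mul_one]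
  have hdiff := hζ.eq_zero_of_forall_sum_mul_zpow_eq_zero a
    (c := fun j => c j - periodize m g j) fun i hi => by
      simp_rw [sub_mul, Finset.sum_sub_distrib, h i hi, mul_comm (g _), mul_comm (periodize m g _)]
      rw [tsum_mul_eq_sum_Ico_mul_periodize (by omega) a (hper i)
        (by simpa only [mul_comm] using hg i), sub_self]
  exact fun j hj => sub_eq_zero.1 (hdiff j hj)

theorem IsPrimitiveRoot.eq_indicator_periodize_of_sum_mul_zpow_eq_tsum {ζ : ℂ}
    (hζ : IsPrimitiveRoot ζ m) (hm : (0 : ℤ) < m) (a : ℤ) {g ĝ : ℤ → ℝ} (hg0 : 0 ≤ g)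
    (hg : Summable g) (hsupp : ∀ j ∉ Finset.Ico a (a + m), ĝ j = 0)
    (h : ∀ i ∈ Finset.Ico a (a + m),
      ∑ j ∈ Finset.Ico a (a + m), (ĝ j : ℂ) * ζ ^ (i * j) =
        ∑' k, (g k : ℂ) * ζ ^ (i * k)) :
    ĝ = (Finset.Ico a (a + m) : Set ℤ).indicator (periodize m g) := by
  have hsummable (i : ℤ) : Summable fun k => (g k : ℂ) * ζ ^ (i * k) := by
    refine Summable.of_norm (hg.congr fun k => ?_)
    rw [norm_mul, norm_zpow, hζ.norm'_eq_one (by omega), one_zpow, mul_one, Complex.norm_real,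
      Real.norm_of_nonneg (hg0 k)]
  funext j
  by_cases hj : j ∈ Finset.Ico a (a + m)
  · rw [Set.indicator_of_mem (Finset.mem_coe.2 hj)]
    have hcj := hζ.eqOn_periodize_of_sum_mul_zpow_eq_tsum a hsummable h j hj
    exact_mod_cast hcj.trans (Complex.ofReal_tsum _).symm
  · rw [Set.indicator_of_notMem (by simpa using hj), hsupp j hj]

theorem le_periodize (hm : m ≠ 0) {g : ℤ → ℝ} (hg0 : 0 ≤ g) (hg : Summable g) (j : ℤ) :
    g j ≤ periodize m g j := by
  have h := (hg.comp_add_mul hm j).le_tsum 0 fun l _ => hg0 _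
  simpa [periodize] using h

theorem tsum_abs_sub_indicator_periodize (hm : (0 : ℤ) < m) (a : ℤ) {g : ℤ → ℝ}
    (hg0 : 0 ≤ g) (hg : Summable g) :
    ∑' k, |g k - (Finset.Ico a (a + m) : Set ℤ).indicator (periodize m g) k| =
      2 * ∑' k, (Finset.Ico a (a + m) : Set ℤ)ᶜ.indicator g k := by
  set W : Finset ℤ := Finset.Ico a (a + m)
  set ĝ := (W : Set ℤ).indicator (periodize m g)
  have hĝ : Summable ĝ := summable_of_ne_finset_zero fun k hk => Set.indicator_of_notMem hk _
  have hpt (k : ℤ) : |g k - ĝ k| = (ĝ k - g k) + 2 * (W : Set ℤ)ᶜ.indicator g k := by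
    by_cases hk : k ∈ W
    · simp [ĝ, hk, abs_of_nonpos (sub_nonpos.2 (le_periodize (m := m) (by omega) hg0 hg k))]
    · simp [ĝ, hk, abs_of_nonneg (hg0 k)]
      ring
  have hmass : ∑' k, ĝ k = ∑' k, g k := by
    rw [tsum_eq_sum_Ico_periodize hm a hg, sum_eq_tsum_indicator]
  rw [tsum_congr hpt, Summable.tsum_add (hĝ.sub hg) ((hg.indicator _).mul_left 2),
    Summable.tsum_sub hĝ hg, hmass, sub_self, zero_add, tsum_mul_left]

theorem mul_tsum_compl_le_tsum_mul_sub_sum_mul_periodize (hm : (0 : ℤ) < m) (a : ℤ)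
    {φ g : ℤ → ℝ} {δ : ℝ} (hg0 : 0 ≤ g) (hg : Summable g)
    (hφg : Summable fun k => φ k * g k)
    (hδ : ∀ k ∉ Finset.Ico a (a + m), ∀ j ∈ Finset.Ico a (a + m), δ ≤ φ k - φ j) :
    δ * ∑' k, (Finset.Ico a (a + m) : Set ℤ)ᶜ.indicator g k ≤
      ∑' k, φ k * g k - ∑ j ∈ Finset.Ico a (a + m), φ j * periodize m g j := by
  set W : Finset ℤ := Finset.Ico a (a + m)
  set ψ : ℤ → ℝ := fun k => φ (toIcoMod hm a k)
  have hψW (j : ℤ) (hj : j ∈ W) : ψ j = φ j := by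
    simp only [ψ, (toIcoMod_eq_self hm).2 (by simpa [W] using hj)]
  have hψ_per : Function.Periodic ψ m := fun k => by
    simpa only [ψ, one_zsmul] using congrArg φ (toIcoMod_add_zsmul hm a k 1)
  have hψ_bdd (k : ℤ) : ‖ψ k‖ ≤ ∑ j ∈ W, ‖φ j‖ :=
    Finset.single_le_sum (f := fun j => ‖φ j‖) (fun _ _ => norm_nonneg _)
      (by simpa [W] using toIcoMod_mem_Ico hm a k)
  have hψg : Summable fun k => ψ k * g k :=
    (hg.norm.mul_left (∑ j ∈ W, ‖φ j‖)).of_norm_bounded fun k => by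
      rw [norm_mul]; exact mul_le_mul_of_nonneg_right (hψ_bdd k) (norm_nonneg _)
  have hpt (k : ℤ) : δ * (W : Set ℤ)ᶜ.indicator g k ≤ φ k * g k - ψ k * g k := by
    by_cases hk : k ∈ W
    · simp [hk, hψW k hk]
    · simpa [hk, sub_mul] using mul_le_mul_of_nonneg_right
        (hδ k hk _ (by simpa [W] using toIcoMod_mem_Ico hm a k)) (hg0 k)
  calc δ * ∑' k, (W : Set ℤ)ᶜ.indicator g k
      = ∑' k, δ * (W : Set ℤ)ᶜ.indicator g k := tsum_mul_left.symm
    _ ≤ ∑' k, (φ k * g k - ψ k * g k) :=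
        Summable.tsum_le_tsum hpt ((hg.indicator _).mul_left δ) (hφg.sub hψg)
    _ = ∑' k, φ k * g k - ∑ j ∈ W, φ j * periodize m g j := by
        rw [Summable.tsum_sub hφg hψg, tsum_mul_eq_sum_Ico_mul_periodize hm a hψ_per hψg]
        exact congrArg _ (Finset.sum_congr rfl fun j hj => by rw [hψW j hj])

theorem two_mul_le_mul_sub_one_sub_mul_sub_one {n r k : ℤ} (hr₁ : -n + 1 ≤ r)
    (hr₂ : r ≤ n) (hk : k ≤ -n ∨ n + 1 ≤ k) : 2 * n ≤ k * (k - 1) - r * (r - 1) := by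
  have hk' : 0 ≤ (k + n) * (k - n - 1) := by
    rcases hk with hk | hk
    · exact mul_nonneg_of_nonpos_of_nonpos (by omega) (by omega)
    · exact mul_nonneg (by omega) (by omega)
  have hr : 0 ≤ (n - r) * (n + r - 1) := mul_nonneg (by omega) (by omega)
  linear_combination hk' + hr

end

theorem interpolation_wiener_norm_bound_general
    (n : ℕ) (hn : 1 ≤ n)
    (ω : ℂ) (hω : ω = Complex.exp (2 * π * Complex.I / (2 * n)))
    (g : ℤ → ℝ) (hgpos : ∀ j : ℤ, 0 ≤ g j)
    (hgsum : Summable g)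
    (hgsum2 : Summable fun j : ℤ => (j : ℝ) * ((j : ℝ) - 1) * g j)
    (gh : ℤ → ℝ)
    (hsupp : ∀ j : ℤ, j ∉ Finset.Icc (-(n : ℤ) + 1) (n : ℤ) → gh j = 0)
    (hinterp : ∀ i ∈ Finset.Icc (-(n : ℤ) + 1) (n : ℤ),
      ∑ j ∈ Finset.Icc (-(n : ℤ) + 1) (n : ℤ), (gh j : ℂ) * ω ^ (i * j) =
        ∑' j : ℤ, (g j : ℂ) * ω ^ (i * j))
    (ε : ℝ)
    (herr : (∑' j : ℤ, (j : ℝ) * ((j : ℝ) - 1) * g j) -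
        (∑ j ∈ Finset.Icc (-(n : ℤ) + 1) (n : ℤ), (j : ℝ) * ((j : ℝ) - 1) * gh j) < ε) :
    ∑' j : ℤ, |g j - gh j| ≤ (1 + 1 / (2 * n)) * ε := by
  set W := Finset.Ico (-(n : ℤ) + 1) (-(n : ℤ) + 1 + (2 * n : ℕ))
  have hm : (0 : ℤ) < (2 * n : ℕ) := by omega
  have hW : Finset.Icc (-(n : ℤ) + 1) n = W := by
    ext; simp only [W, Finset.mem_Icc, Finset.mem_Ico]; omega
  rw [hW] at hsupp hinterp herr
  have hζ : IsPrimitiveRoot ω (2 * n) := by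
    rw [hω]; exact_mod_cast Complex.isPrimitiveRoot_exp (2 * n) (by omega)
  obtain rfl := hζ.eq_indicator_periodize_of_sum_mul_zpow_eq_tsum hm _ hgpos hgsum hsupp hinterp
  rw [Finset.sum_congr rfl fun j hj => by rw [Set.indicator_of_mem (Finset.mem_coe.2 hj)]] at herr
  set T := ∑' k, (W : Set ℤ)ᶜ.indicator g k
  have hT : 0 ≤ T := tsum_nonneg (Set.indicator_nonneg fun k _ => hgpos k)
  have hgap : 2 * n * T < ε := by
    refine (mul_tsum_compl_le_tsum_mul_sub_sum_mul_periodize hm _ hgpos hgsum hgsum2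
      fun k hk j hj => ?_).trans_lt herr
    simp only [Finset.mem_Ico] at hk hj
    exact_mod_cast two_mul_le_mul_sub_one_sub_mul_sub_one (n := n) (by omega) (by omega) (by omega)
  have hε : 0 ≤ ε := (mul_nonneg (by positivity) hT).trans hgap.le
  rw [tsum_abs_sub_indicator_periodize hm _ hgpos hgsum]
  calc 2 * T ≤ 2 * n * T := by gcongr; norm_cast; omega
    _ ≤ ε := hgap.le
    _ ≤ (1 + 1 / (2 * n)) * ε := le_mul_of_one_le_left hε (by simp)

/-- Wiener-norm accuracy of the interpolation: with `g`, `gh` (`= ĝ`) as in the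
interpolation lemma (nonnegative summable coefficients, summable second derivative,
`gh` supported on `{−n+1, …, n}` and interpolating `g` at the `2n`-th roots of
unity), if `g''(1) − gh''(1) < ε` then `‖g − gh‖_W = ∑_{j ∈ ℤ} |g_j − gh_j| ≤
(1 + 1/(2n)) ε`. -/
theorem interpolation_wiener_norm_bound
    (n : ℕ) (hn : 1 ≤ n)
    (ω : ℂ) (hω : ω = Complex.exp (2 * π * Complex.I / (2 * n)))
    (g : ℤ → ℝ) (hgpos : ∀ j : ℤ, 0 ≤ g j)
    (hgsum : Summable g)
    (hgsum2 : Summable fun j : ℤ => (j : ℝ) * ((j : ℝ) - 1) * g j)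
    (gh : ℤ → ℝ)
    (hsupp : ∀ j : ℤ, j ∉ Finset.Icc (-(n : ℤ) + 1) (n : ℤ) → gh j = 0)
    (hinterp : ∀ i ∈ Finset.Icc (-(n : ℤ) + 1) (n : ℤ),
      ∑ j ∈ Finset.Icc (-(n : ℤ) + 1) (n : ℤ), (gh j : ℂ) * ω ^ (i * j) =
        ∑' j : ℤ, (g j : ℂ) * ω ^ (i * j))
    (ε : ℝ) (hε : 0 < ε)
    (herr : (∑' j : ℤ, (j : ℝ) * ((j : ℝ) - 1) * g j) -
        (∑ j ∈ Finset.Icc (-(n : ℤ) + 1) (n : ℤ), (j : ℝ) * ((j : ℝ) - 1) * gh j) < ε) :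
    ∑' j : ℤ, |g j - gh j| ≤ (1 + 1 / (2 * n)) * ε :=
  interpolation_wiener_norm_bound_general n hn ω hω g hgpos hgsum hgsum2 gh hsupp hinterp ε herr
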